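/- arXiv:1707.09854 — 2 statements merged into one kernel-verified Lean document; each statement's English description precedes it below -/
import Mathlib

section
/- Let R_n = ℤ[x₁^{±1},…,x_n^{±1}] and σ_i = x_i − 1. If I_n + A ∈ GL_n(R_n) satisfies (I_n + A)·σ⃗ = σ⃗ (equivalently A·σ⃗ = 0⃗), then det(I_n + A) = ∏_{r=1}^n x_r^{s_r} for some integers s_r; in particular, the determinant is a product of powers of the variables with coefficient +1 (the sign −1 is impossible). -/
/-!
The units of `ℤ[ℤⁿ]` are the monomials `±xᵍ`: since `ℤⁿ` has the two-unique-sums property, a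
product `u * v = 1` with `u` or `v` not a monomial would have two distinct extremal degrees
that cannot cancel. The determinant of the invertible matrix `I + A` is therefore `c xᵍ` with
`c = ±1`, and `c` is its image under the augmentation `ε : xᵢ ↦ 1` (the bialgebra counit). Specializing all variables
but `x_j` to `1` turns `A·σ⃗ = 0` into `a_{kj} (x - 1) = 0` in the domain `ℤ[x^{±1}]`, so every
entry of `A` lies in the augmentation ideal, `ε (I + A) = I`, and `c = ε (det (I + A)) = 1`.
-/

/-- The Laurent polynomial ring `R_n = ℤ[x₁^{±1},…,x_n^{±1}] = ℤ[ℤⁿ]`. -/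
abbrev Rn (n : ℕ) := AddMonoidAlgebra ℤ (Fin n →₀ ℤ)

/-- `σ_i = x_i - 1`. -/
noncomputable def sg {n : ℕ} (i : Fin n) : Rn n :=
  AddMonoidAlgebra.single (Finsupp.single i 1) 1 - 1

open AddMonoidAlgebra

theorem AddMonoidAlgebra.exists_eq_single_of_isUnit {R G : Type*} [Semiring R] [NoZeroDivisors R]
    [AddMonoid G] [TwoUniqueSums G] {u : R[G]} (hu : IsUnit u) : ∃ g c, u = single g c := by
  classical
  rcases subsingleton_or_nontrivial R with _ | _
  · exact ⟨0, 0, Subsingleton.elim _ _⟩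
  obtain ⟨v, huv⟩ := hu.exists_right_inv
  have hsupp : ∀ {w : R[G]}, w ≠ 0 → w.coeff.support.Nonempty := fun hw ↦
    Finsupp.support_nonempty_iff.mpr (mt coeff_eq_zero.mp hw)
  have hu0 := hsupp (left_ne_zero_of_mul_eq_one huv)
  have hv0 := hsupp (right_ne_zero_of_mul_eq_one huv)
  -- A uniquely attained degree `a + b` of `u * v = 1` carries the coefficient `u_a v_b ≠ 0`.
  have unique_sum_eq_zero : ∀ a ∈ u.coeff.support, ∀ b ∈ v.coeff.support,
      UniqueAdd u.coeff.support v.coeff.support a b → a + b = 0 := by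
    intro a ha b hb hab
    by_contra hne
    have := coeff_mul_add_of_uniqueAdd hab
    rw [huv, one_def, coeff_single, Finsupp.single_apply, if_neg (Ne.symm hne)] at this
    exact mul_ne_zero (Finsupp.mem_support_iff.mp ha) (Finsupp.mem_support_iff.mp hb) this.symm
  have hcard : u.coeff.support.card ≤ 1 := by
    by_contra! h
    obtain ⟨p, hp, q, hq, hpq, hup, huq⟩ := TwoUniqueSums.uniqueAdd_of_one_lt_card
      (lt_of_lt_of_le h (Nat.le_mul_of_pos_right _ hv0.card_pos))
    rw [Finset.mem_product] at hp hq
    obtain ⟨h1, h2⟩ := hup hq.1 hq.2 ((unique_sum_eq_zero _ hq.1 _ hq.2 huq).trans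
      (unique_sum_eq_zero _ hp.1 _ hp.2 hup).symm)
    exact hpq (Prod.ext h1.symm h2.symm)
  obtain ⟨g, hg⟩ := Finset.card_eq_one.mp (le_antisymm hcard hu0.card_pos)
  exact ⟨g, u.coeff g, coeff_injective (Finsupp.support_eq_singleton.mp hg).2⟩

theorem RingHom.map_det_one_add_eq_one {ι A B : Type*} [Fintype ι] [DecidableEq ι] [CommRing A]
    [CommRing B] (f : A →+* B) (M : Matrix ι ι A) (hM : ∀ i j, f (M i j) = 0) :
    f (1 + M).det = 1 := by
  have : f.mapMatrix M = 0 := Matrix.ext hM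
  rw [f.map_det, map_add, map_one, this, add_zero, Matrix.det_one]

theorem counit_eq_zero_of_sum_mul_sg_eq_zero {n : ℕ} {a : Fin n → Rn n}
    (h : ∑ i, a i * sg i = 0) (j : Fin n) : Coalgebra.counit (R := ℤ) (a j) = 0 := by
  -- Specialize `x_j ↦ X` and `x_i ↦ 1` for `i ≠ j`: only `σ_j` survives, as `X - 1`.
  set φ := mapDomainBialgHom ℤ (Finsupp.applyAddHom (M := ℤ) j)
  have hφ : ∀ i, φ (sg i) = if i = j then single 1 1 - 1 else 0 := by
    intro i
    rw [sg, map_sub, map_one, mapDomainBialgHom_single]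
    split_ifs with hij
    · rw [hij, Finsupp.applyAddHom_apply, Finsupp.single_eq_same]
    · rw [Finsupp.applyAddHom_apply, Finsupp.single_eq_of_ne (Ne.symm hij), ← one_def, sub_self]
  have hX : (single 1 1 - 1 : AddMonoidAlgebra ℤ ℤ) ≠ 0 := by
    rw [sub_ne_zero, one_def, Ne, single_left_inj one_ne_zero]
    exact one_ne_zero
  have hφa : φ (a j) * (single 1 1 - 1) = 0 := by
    simpa [map_sum, hφ] using congrArg φ h
  rw [← CoalgHomClass.counit_comp_apply φ, (mul_eq_zero.mp hφa).resolve_right hX, map_zero]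

/-- If `I_n + A ∈ GL_n(R_n)` satisfies `A·σ⃗ = 0⃗`, then `det(I_n + A)` is a Laurent
monomial with coefficient `+1`, i.e. `det(I_n + A) = ∏_r x_r^{s_r}` for some integers
`s_r` (the sign `-1` is impossible). -/
theorem det_of_IA_is_monomial (n : ℕ) (A : Matrix (Fin n) (Fin n) (Rn n))
    (hU : IsUnit ((1 : Matrix (Fin n) (Fin n) (Rn n)) + A))
    (hA : ∀ k : Fin n, ∑ i : Fin n, A k i * sg i = 0) :
    ∃ s : Fin n → ℤ,
      ((1 : Matrix (Fin n) (Fin n) (Rn n)) + A).det =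
        AddMonoidAlgebra.single (∑ r : Fin n, Finsupp.single r (s r)) 1 := by
  obtain ⟨g, c, hdet⟩ := exists_eq_single_of_isUnit ((Matrix.isUnit_iff_isUnit_det _).mp hU)
  have hc : c = 1 := by
    have := (Bialgebra.counitAlgHom ℤ (Rn n)).toRingHom.map_det_one_add_eq_one A
      fun k i ↦ counit_eq_zero_of_sum_mul_sg_eq_zero (hA k) i
    simpa [hdet] using this
  exact ⟨g, by rw [hdet, hc, Finsupp.univ_sum_single]⟩
end

section
/- Let R_n = ℤ[x₁^{±1},…,x_n^{±1}], σ_i = x_i − 1, and fix 1 ≤ i ≤ n. The group IGL_{n−1,i} of matrices I_n + A ∈ GL_n(R_n) with A·σ⃗ = 0⃗ whose i-th row of A is zero and whose (i,i)-minor I_{n−1} + A_{i,i} lies in GL_{n−1}(R_n, σ_i R_n) is isomorphic to GL_{n−1}(R_n, σ_i R_n) via I_n + A ↦ I_{n−1} + A_{i,i}. -/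
/-- The subgroup `IGL_{n-1,i}` of the Magnus-embedded `IA(Φ_n)`: invertible matrices `M`
with `M·σ⃗ = σ⃗`, whose `i`-th row is the `i`-th row of the identity, and whose
`(i,i)`-minor lies in `GL_{n-1}(R_n, σ_i R_n)`. -/
def IGLset (n : ℕ) (i : Fin (n + 1)) : Set (Matrix (Fin (n + 1)) (Fin (n + 1)) (Rn (n + 1))) :=
  {M | IsUnit M ∧ (∀ k, ∑ l, M k l * sg l = sg k) ∧
    (∀ l, M i l = (1 : Matrix (Fin (n + 1)) (Fin (n + 1)) (Rn (n + 1))) i l) ∧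
    IsUnit (M.submatrix i.succAbove i.succAbove) ∧
    ∀ p q, M.submatrix i.succAbove i.succAbove p q -
      (1 : Matrix (Fin n) (Fin n) (Rn (n + 1))) p q ∈ Ideal.span {sg i}}

/-- The congruence subgroup `GL_{n-1}(R_n, σ_i R_n)`, as a set of `(n-1)×(n-1)` matrices. -/
def GLcset (n : ℕ) (i : Fin (n + 1)) : Set (Matrix (Fin n) (Fin n) (Rn (n + 1))) :=
  {B | IsUnit B ∧ ∀ p q, B p q - (1 : Matrix (Fin n) (Fin n) (Rn (n + 1))) p q ∈ Ideal.span {sg i}}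

/-!
For matrices whose `i`-th row is that of the identity, deleting the `i`-th row and column is
multiplicative and preserves the determinant, and such matrices are closed under products. The
condition `M σ⃗ = σ⃗` then pins down the remaining `i`-th column from the minor, because `σ_i`
is a non-zero-divisor. Conversely, a minor `B = I + σ_i A` extends to such a matrix by taking
`-A (σ_j)_{j ≠ i}` as the `i`-th column, which cancels the error term `σ_i A (σ_j)_{j ≠ i}`.
-/

theorem Ideal.mul_sub_one_mem {A : Type*} [Ring A] {J : Ideal A} {a b : A}
    (ha : a - 1 ∈ J) (hb : b - 1 ∈ J) : a * b - 1 ∈ J := by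
  have h : a * b - 1 = a * (b - 1) + (a - 1) := by rw [mul_sub, mul_one, sub_add_sub_cancel]
  exact h ▸ J.add_mem (J.mul_mem_left a hb) ha

namespace Matrix

variable {R : Type*} {n : ℕ} {i : Fin (n + 1)}

section Semiring

variable [Semiring R]

theorem mul_row_eq_one_row {M N : Matrix (Fin (n + 1)) (Fin (n + 1)) R}
    (hM : M i = (1 : Matrix _ _ R) i) (hN : N i = (1 : Matrix _ _ R) i) :
    (M * N) i = (1 : Matrix _ _ R) i := by
  ext l
  rw [mul_apply, hM, ← mul_apply, one_mul, hN]

theorem submatrix_succAbove_mul (M : Matrix (Fin (n + 1)) (Fin (n + 1)) R)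
    {N : Matrix (Fin (n + 1)) (Fin (n + 1)) R} (hN : N i = (1 : Matrix _ _ R) i) :
    (M * N).submatrix i.succAbove i.succAbove =
      M.submatrix i.succAbove i.succAbove * N.submatrix i.succAbove i.succAbove := by
  ext p q
  have hNi : N i (i.succAbove q) = 0 := by
    rw [hN]; exact one_apply_ne (i.succAbove_ne q).symm
  simp only [submatrix_apply, mul_apply, Fin.sum_univ_succAbove _ i, hNi, mul_zero, zero_add]

end Semiring

variable [CommRing R]

theorem det_eq_det_submatrix_succAbove {M : Matrix (Fin (n + 1)) (Fin (n + 1)) R}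
    (hM : M i = (1 : Matrix _ _ R) i) :
    M.det = (M.submatrix i.succAbove i.succAbove).det := by
  rw [det_succ_row M i, Finset.sum_eq_single i]
  · rw [hM, one_apply_eq, ← two_mul, pow_mul, neg_one_sq, one_pow, one_mul, one_mul]
  · intro j _ hj
    rw [hM, one_apply_ne hj.symm, mul_zero, zero_mul]
  · exact fun hi => absurd (Finset.mem_univ i) hi

theorem isUnit_iff_isUnit_submatrix_succAbove {M : Matrix (Fin (n + 1)) (Fin (n + 1)) R}
    (hM : M i = (1 : Matrix _ _ R) i) :
    IsUnit M ↔ IsUnit (M.submatrix i.succAbove i.succAbove) := by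
  rw [isUnit_iff_isUnit_det, isUnit_iff_isUnit_det, det_eq_det_submatrix_succAbove hM]

theorem eq_of_submatrix_succAbove_eq {σ : Fin (n + 1) → R} (hσ : σ i ∈ nonZeroDivisors R)
    {M N : Matrix (Fin (n + 1)) (Fin (n + 1)) R}
    (hMi : M i = (1 : Matrix _ _ R) i) (hNi : N i = (1 : Matrix _ _ R) i)
    (hMσ : M *ᵥ σ = σ) (hNσ : N *ᵥ σ = σ)
    (h : M.submatrix i.succAbove i.succAbove = N.submatrix i.succAbove i.succAbove) :
    M = N := by
  have hminor (p q : Fin n) :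
      M (i.succAbove p) (i.succAbove q) = N (i.succAbove p) (i.succAbove q) :=
    congrFun (congrFun h p) q
  ext k l
  induction k using Fin.succAboveCases i with
  | x => rw [hMi, hNi]
  | p p =>
    induction l using Fin.succAboveCases i with
    | x =>
      have hrow := congrFun (hMσ.trans hNσ.symm) (i.succAbove p)
      simp only [mulVec, dotProduct, Fin.sum_univ_succAbove _ i, hminor, add_left_inj] at hrow
      exact (mul_cancel_right_mem_nonZeroDivisors hσ).1 hrow
    | p q => exact hminor p q

def border (i : Fin (n + 1)) (c : Fin n → R) (B : Matrix (Fin n) (Fin n) R) :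
    Matrix (Fin (n + 1)) (Fin (n + 1)) R :=
  of (i.insertNth ((1 : Matrix _ _ R) i) fun p => i.insertNth (c p) (B p))

@[simp]
theorem border_row (c : Fin n → R) (B : Matrix (Fin n) (Fin n) R) :
    border i c B i = (1 : Matrix _ _ R) i := by
  ext l
  simp [border]

@[simp]
theorem border_succAbove_self (c : Fin n → R) (B : Matrix (Fin n) (Fin n) R) (p : Fin n) :
    border i c B (i.succAbove p) i = c p := by
  simp [border]

@[simp]
theorem border_succAbove_succAbove (c : Fin n → R) (B : Matrix (Fin n) (Fin n) R) (p q : Fin n) :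
    border i c B (i.succAbove p) (i.succAbove q) = B p q := by
  simp [border]

theorem submatrix_border (c : Fin n → R) (B : Matrix (Fin n) (Fin n) R) :
    (border i c B).submatrix i.succAbove i.succAbove = B := by
  ext p q
  simp

theorem border_mulVec_self (c : Fin n → R) (B : Matrix (Fin n) (Fin n) R)
    (σ : Fin (n + 1) → R) :
    (border i c B *ᵥ σ) i = σ i := by
  conv_rhs => rw [← one_mulVec σ]
  exact congrArg (· ⬝ᵥ σ) (border_row c B)

theorem border_mulVec_succAbove (c : Fin n → R) (B : Matrix (Fin n) (Fin n) R)
    (σ : Fin (n + 1) → R) (p : Fin n) :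
    (border i c B *ᵥ σ) (i.succAbove p) = c p * σ i + (B *ᵥ (σ ∘ i.succAbove)) p := by
  simp only [mulVec, dotProduct, Fin.sum_univ_succAbove _ i, border_succAbove_self,
    border_succAbove_succAbove, Function.comp_apply]

theorem exists_mulVec_eq_self_of_submatrix {σ : Fin (n + 1) → R}
    {B : Matrix (Fin n) (Fin n) R} (hB : B - 1 ∈ (Ideal.span {σ i}).matrix (Fin n)) :
    ∃ M : Matrix (Fin (n + 1)) (Fin (n + 1)) R, M i = (1 : Matrix _ _ R) i ∧ M *ᵥ σ = σ ∧
      M.submatrix i.succAbove i.succAbove = B := by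
  choose A hA using fun p q => Ideal.mem_span_singleton'.1 (hB p q)
  have hBA : B = 1 + σ i • of A := by
    ext p q
    simp only [add_apply, smul_apply, of_apply, smul_eq_mul]
    linear_combination -(hA p q) - sub_apply B 1 p q
  refine ⟨border i (-(of A *ᵥ (σ ∘ i.succAbove))) B, border_row _ _, ?_, submatrix_border _ _⟩
  ext k
  induction k using Fin.succAboveCases i with
  | x => exact border_mulVec_self _ _ σ
  | p p =>
    rw [border_mulVec_succAbove, hBA, add_mulVec, one_mulVec, smul_mulVec]
    simp only [Pi.add_apply, Pi.neg_apply, Pi.smul_apply, smul_eq_mul, Function.comp_apply]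
    ring

end Matrix

theorem sg_ne_zero {n : ℕ} (i : Fin n) : sg i ≠ 0 := by
  rw [sg, AddMonoidAlgebra.one_def, sub_ne_zero, Ne, AddMonoidAlgebra.single_left_inj one_ne_zero,
    Finsupp.single_eq_zero]
  exact one_ne_zero

/-- `IGL_{n-1,i} ≅ GL_{n-1}(R_n, σ_i R_n)` via `I_n + A ↦ I_{n-1} + A_{i,i}` (deleting the
`i`-th row and column): the minor map is a multiplicative bijection, and `IGL_{n-1,i}` is
closed under multiplication. -/
theorem IGL_iso_GL_congruence (n : ℕ) (i : Fin (n + 1)) :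
    (∀ M ∈ IGLset n i, ∀ N ∈ IGLset n i, M * N ∈ IGLset n i) ∧
    Set.BijOn (fun M => M.submatrix i.succAbove i.succAbove) (IGLset n i) (GLcset n i) ∧
    (∀ M ∈ IGLset n i, ∀ N ∈ IGLset n i,
      (M * N).submatrix i.succAbove i.succAbove =
        M.submatrix i.succAbove i.succAbove * N.submatrix i.succAbove i.succAbove) := by
  have hrow {M} (hM : M ∈ IGLset n i) : M i = (1 : Matrix _ _ (Rn (n + 1))) i :=
    funext hM.2.2.1
  have hfix {M} (hM : M ∈ IGLset n i) : M.mulVec sg = sg := funext hM.2.1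
  refine ⟨?_, ⟨fun M hM => hM.2.2.2, ?_, ?_⟩, fun M _ N hN => M.submatrix_succAbove_mul (hrow hN)⟩
  · intro M hM N hN
    have hminor := M.submatrix_succAbove_mul (hrow hN)
    have hfixMN : (M * N).mulVec sg = sg := by rw [← Matrix.mulVec_mulVec, hfix hN, hfix hM]
    refine ⟨hM.1.mul hN.1, congrFun hfixMN,
      congrFun (Matrix.mul_row_eq_one_row (hrow hM) (hrow hN)),
      hminor ▸ hM.2.2.2.1.mul hN.2.2.2.1, ?_⟩
    rw [hminor]
    exact Ideal.mul_sub_one_mem (J := (Ideal.span {sg i}).matrix (Fin n)) hM.2.2.2.2 hN.2.2.2.2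
  · exact fun M hM N hN => Matrix.eq_of_submatrix_succAbove_eq
      (mem_nonZeroDivisors_of_ne_zero (sg_ne_zero i)) (hrow hM) (hrow hN) (hfix hM) (hfix hN)
  · rintro B ⟨hBunit, hBcong⟩
    obtain ⟨M, hMi, hMσ, rfl⟩ := Matrix.exists_mulVec_eq_self_of_submatrix (σ := sg) hBcong
    exact ⟨M, ⟨(Matrix.isUnit_iff_isUnit_submatrix_succAbove hMi).2 hBunit, congrFun hMσ,
      congrFun hMi, hBunit, hBcong⟩, rfl⟩
end
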